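/- arXiv:2301.11409 — 10 statements merged into one kernel-verified Lean document; each statement's English description precedes it below -/
import Mathlib

section
/- The eight three-qubit product vectors |δ₀⟩=|0̄⟩|1⟩|+⟩, |δ₁⟩=|0̄⟩|1⟩|−⟩, |δ₂⟩=|+̄⟩|0⟩|1⟩, |δ₃⟩=|−̄⟩|0⟩|1⟩, |δ₄⟩=|1̄⟩|+⟩|0⟩, |δ₅⟩=|1̄⟩|−⟩|0⟩, |δ₆⟩=|0̄⟩|0⟩|0⟩, |δ₇⟩=|1̄⟩|1⟩|1⟩ form an orthonormal basis of (ℂ²)^⊗3. -/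
open Matrix Finset Real
open scoped ComplexOrder Kronecker

noncomputable section

/-- The three-qubit Hilbert space index: bit triples. -/
abbrev Q3 := Fin 2 × Fin 2 × Fin 2

/-- Inner product `⟨v|w⟩ = ∑ᵢ v(i)* w(i)`. -/
def inn {n : Type*} [Fintype n] (v w : n → ℂ) : ℂ := ∑ i, star (v i) * w i

/-- Rank-one projector `|v⟩⟨v|`. -/
def proj {n : Type*} (v : n → ℂ) : Matrix n n ℂ := Matrix.vecMulVec v (star v)

/-- Product vector `|a⟩⊗|b⟩⊗|c⟩` on three qubits. -/
def prod3 (a b c : Fin 2 → ℂ) : Q3 → ℂ := fun x => a x.1 * b x.2.1 * c x.2.2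

def ket0 : Fin 2 → ℂ := ![1, 0]
def ket1 : Fin 2 → ℂ := ![0, 1]
def ketP : Fin 2 → ℂ := ![(1 / Real.sqrt 2 : ℝ), (1 / Real.sqrt 2 : ℝ)]
def ketM : Fin 2 → ℂ := ![(1 / Real.sqrt 2 : ℝ), (-(1 / Real.sqrt 2) : ℝ)]
/-- `|0̄⟩ = cos(π/8)|0⟩ + sin(π/8)|1⟩`. -/
def ket0b : Fin 2 → ℂ := ![(Real.cos (π / 8) : ℝ), (Real.sin (π / 8) : ℝ)]
/-- `|1̄⟩ = -sin(π/8)|0⟩ + cos(π/8)|1⟩`. -/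
def ket1b : Fin 2 → ℂ := ![(-Real.sin (π / 8) : ℝ), (Real.cos (π / 8) : ℝ)]
/-- `|+̄⟩ = sin(π/8)|0⟩ + cos(π/8)|1⟩`. -/
def ketPb : Fin 2 → ℂ := ![(Real.sin (π / 8) : ℝ), (Real.cos (π / 8) : ℝ)]
/-- `|−̄⟩ = cos(π/8)|0⟩ - sin(π/8)|1⟩`. -/
def ketMb : Fin 2 → ℂ := ![(Real.cos (π / 8) : ℝ), (-Real.sin (π / 8) : ℝ)]

/-- The four vectors of the Shifts-type unextendible product basis. -/
def tau : Fin 4 → Q3 → ℂ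
  | 0 => prod3 ket0b ket1 ketP
  | 1 => prod3 ketPb ket0 ket1
  | 2 => prod3 ket1b ketP ket0
  | 3 => prod3 ketMb ketM ketM

/-- Pauli X. -/
def PX : Matrix (Fin 2) (Fin 2) ℂ := !![0, 1; 1, 0]
/-- Pauli Y. -/
def PY : Matrix (Fin 2) (Fin 2) ℂ := !![0, -Complex.I; Complex.I, 0]
/-- Pauli Z. -/
def PZ : Matrix (Fin 2) (Fin 2) ℂ := !![1, 0; 0, -1]

/-- The eight product vectors of the three-qubit basis exhibiting nonlocality
without entanglement. -/
def delta : Fin 8 → Q3 → ℂ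
  | 0 => prod3 ket0b ket1 ketP
  | 1 => prod3 ket0b ket1 ketM
  | 2 => prod3 ketPb ket0 ket1
  | 3 => prod3 ketMb ket0 ket1
  | 4 => prod3 ket1b ketP ket0
  | 5 => prod3 ket1b ketM ket0
  | 6 => prod3 ket0b ket0 ket0
  | 7 => prod3 ket1b ket1 ket1

/-! The inner product of product vectors factorises, and any two distinct `δ`'s carry, in some
tensor factor, the two different members of one of the single-qubit orthonormal bases
`{|0⟩, |1⟩}`, `{|+⟩, |−⟩}`, `{|0̄⟩, |1̄⟩}`, `{|+̄⟩, |−̄⟩}`; so the eight vectors are orthonormal.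
Orthonormal vectors are linearly independent, and eight of them span the 8-dimensional
space `Q3 → ℂ`. -/

lemma inn_eq_inner {n : Type*} [Fintype n] (v w : n → ℂ) :
    inn v w = inner ℂ (WithLp.toLp 2 v : EuclideanSpace ℂ n) (WithLp.toLp 2 w) := by
  simp only [inn, EuclideanSpace.inner_toLp_toLp, dotProduct, Pi.star_apply, mul_comm]

lemma linearIndependent_of_inn_eq_ite {ι n : Type*} [Fintype n] [DecidableEq ι]
    (v : ι → n → ℂ) (hv : ∀ i j, inn (v i) (v j) = if i = j then 1 else 0) :
    LinearIndependent ℂ v := by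
  have hortho : Orthonormal ℂ (fun i => WithLp.toLp 2 (v i) : ι → EuclideanSpace ℂ n) := by
    rw [orthonormal_iff_ite]
    intro i j
    rw [← inn_eq_inner, hv]
  exact hortho.linearIndependent.map' (WithLp.linearEquiv 2 ℂ (n → ℂ)).toLinearMap
    (WithLp.linearEquiv 2 ℂ (n → ℂ)).ker

lemma span_eq_top_of_inn_eq_ite {ι n : Type*} [Fintype ι] [Fintype n] [DecidableEq ι]
    (v : ι → n → ℂ) (hv : ∀ i j, inn (v i) (v j) = if i = j then 1 else 0)
    (hcard : Fintype.card ι = Fintype.card n) :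
    Submodule.span ℂ (Set.range v) = ⊤ :=
  (linearIndependent_of_inn_eq_ite v hv).span_eq_top_of_card_eq_finrank'
    (by rw [Module.finrank_fintype_fun_eq_card, hcard])

lemma inn_prod3 (a b c a' b' c' : Fin 2 → ℂ) :
    inn (prod3 a b c) (prod3 a' b' c') = inn a a' * inn b b' * inn c c' := by
  simp only [inn, prod3, Fintype.sum_prod_type, Fin.sum_univ_two, star_mul']
  ring

lemma inn_ofReal_pair (a b c d : ℝ) :
    inn ![(a : ℂ), (b : ℂ)] ![(c : ℂ), (d : ℂ)] = ((a * c + b * d : ℝ) : ℂ) := by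
  simp only [inn, Fin.sum_univ_two, Matrix.cons_val_zero, Matrix.cons_val_one,
    Complex.star_def, Complex.conj_ofReal]
  push_cast
  ring

lemma inn_ket0_ket1 :
    inn ket0 ket0 = 1 ∧ inn ket1 ket1 = 1 ∧ inn ket0 ket1 = 0 ∧ inn ket1 ket0 = 0 := by
  simp [inn, Fin.sum_univ_two, ket0, ket1]

lemma inn_ketP_ketM :
    inn ketP ketP = 1 ∧ inn ketM ketM = 1 ∧ inn ketP ketM = 0 ∧ inn ketM ketP = 0 := by
  have h : (1 / √2 : ℝ) * (1 / √2) = 1 / 2 := by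
    rw [div_mul_div_comm, Real.mul_self_sqrt zero_le_two, one_mul]
  simp only [ketP, ketM, inn_ofReal_pair, mul_neg, neg_mul, h]
  norm_num

lemma inn_ket0b_ket1b :
    inn ket0b ket0b = 1 ∧ inn ket1b ket1b = 1 ∧ inn ket0b ket1b = 0 ∧ inn ket1b ket0b = 0 := by
  simp only [ket0b, ket1b, inn_ofReal_pair]
  refine ⟨?_, ?_, ?_, ?_⟩ <;> norm_cast <;> nlinarith [sin_sq_add_cos_sq (π / 8)]

lemma inn_ketPb_ketMb :
    inn ketPb ketPb = 1 ∧ inn ketMb ketMb = 1 ∧ inn ketPb ketMb = 0 ∧ inn ketMb ketPb = 0 := by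
  simp only [ketPb, ketMb, inn_ofReal_pair]
  refine ⟨?_, ?_, ?_, ?_⟩ <;> norm_cast <;> nlinarith [sin_sq_add_cos_sq (π / 8)]

lemma inn_delta (i j : Fin 8) : inn (delta i) (delta j) = if i = j then 1 else 0 := by
  fin_cases i <;> fin_cases j <;>
    simp [delta, inn_prod3, inn_ket0_ket1, inn_ketP_ketM, inn_ket0b_ket1b, inn_ketPb_ketMb]

/-- The eight vectors `|δ₀⟩,…,|δ₇⟩` form an orthonormal basis of `(ℂ²)^⊗3`. -/
theorem stmt_2 :
    (∀ i j : Fin 8, inn (delta i) (delta j) = if i = j then 1 else 0) ∧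
      Submodule.span ℂ (Set.range delta) = ⊤ :=
  ⟨inn_delta, span_eq_top_of_inn_eq_ite delta inn_delta rfl⟩
end
end

section
/- The state ρ = Γ/4, where Γ = 1 − Σ_{i=0}^{3}|τᵢ⟩⟨τᵢ| for the Shifts-type UPB {|τᵢ⟩}, is entangled: it is not a convex combination of product states ρ_A⊗ρ_B⊗ρ_C. -/
open Matrix Finset Real
open scoped ComplexOrder Kronecker

noncomputable section

/-- The projector onto the subspace complementary to the span of the UPB. -/
def Gam : Matrix Q3 Q3 ℂ := 1 - ∑ i : Fin 4, proj (tau i)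

/-! Each `τ_j` lies in the kernel of `Γ`, and a vector in the kernel of a sum of positive
semidefinite terms is isotropic for every term with nonzero weight. So if
`ρ = ∑ pᵢ ρAᵢ ⊗ ρBᵢ ⊗ ρCᵢ` and `pᵢ ≠ 0`, then for every `j` one of the three local states of
component `i` has zero expectation in the corresponding local factor of `τ_j`. By pigeonhole one
party does so for two different `j`; since the local factors of this UPB on any party are pairwise
linearly independent, that `2 × 2` local state annihilates a basis and vanishes, contradicting
`trace = 1`. -/

lemma eq_zero_of_mulVec_eq_zero_of_det_ne_zero {m K : Type*} [Field K] {X : Matrix m (Fin 2) K}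
    {v w : Fin 2 → K} (hvw : (Matrix.of ![v, w]).det ≠ 0) (hv : X *ᵥ v = 0) (hw : X *ᵥ w = 0) :
    X = 0 := by
  rw [det_fin_two] at hvw
  simp only [of_apply, cons_val_zero, cons_val_one, cons_val_fin_one] at hvw
  ext r c
  have hvr := congrFun hv r
  have hwr := congrFun hw r
  simp only [mulVec, dotProduct, Fin.sum_univ_two, Pi.zero_apply] at hvr hwr
  refine (mul_eq_zero.mp ?_).resolve_right hvw
  revert c
  refine Fin.forall_fin_two.mpr ⟨?_, ?_⟩
  · linear_combination w 1 * hvr - v 1 * hwr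
  · linear_combination v 0 * hwr - w 0 * hvr

lemma dotProduct_mulVec_eq_zero_of_sum_smul {ι n : Type*} [Fintype ι] [Fintype n] {p : ι → ℝ}
    {M : ι → Matrix n n ℂ} (hp : ∀ i, 0 ≤ p i) (hM : ∀ i, (M i).PosSemidef) {v : n → ℂ}
    (h : star v ⬝ᵥ (∑ i, (p i : ℂ) • M i) *ᵥ v = 0) {i : ι} (hi : p i ≠ 0) :
    star v ⬝ᵥ M i *ᵥ v = 0 := by
  simp only [sum_mulVec, dotProduct_sum, smul_mulVec, dotProduct_smul] at h
  have hterm := (Finset.sum_eq_zero_iff_of_nonneg fun i _ =>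
    mul_nonneg (Complex.zero_le_real.mpr (hp i)) ((hM i).dotProduct_mulVec_nonneg v)).mp h i
    (Finset.mem_univ i)
  exact (mul_eq_zero.mp hterm).resolve_left (Complex.ofReal_ne_zero.mpr hi)

lemma proj_mulVec {n : Type*} [Fintype n] (u v : n → ℂ) : proj u *ᵥ v = inn u v • u := by
  rw [proj, vecMulVec_mulVec, op_smul_eq_smul]
  rfl

lemma kronecker_mulVec_prod3 (A B C : Matrix (Fin 2) (Fin 2) ℂ) (a b c : Fin 2 → ℂ) :
    (A ⊗ₖ (B ⊗ₖ C)) *ᵥ prod3 a b c = prod3 (A *ᵥ a) (B *ᵥ b) (C *ᵥ c) := by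
  funext x
  simp only [mulVec, dotProduct, kroneckerMap_apply, prod3, Fintype.sum_prod_type,
    Fin.sum_univ_two]
  ring

lemma inn_ofReal (a b c d : ℝ) : inn ![(a : ℂ), b] ![(c : ℂ), d] = (a * c + b * d : ℝ) := by
  simp [inn, Fin.sum_univ_two]

lemma ket0_eq_ofReal : ket0 = ![((1 : ℝ) : ℂ), ((0 : ℝ) : ℂ)] := by simp [ket0]

lemma ket1_eq_ofReal : ket1 = ![((0 : ℝ) : ℂ), ((1 : ℝ) : ℂ)] := by simp [ket1]

lemma inn_tau (i j : Fin 4) : inn (tau i) (tau j) = if i = j then 1 else 0 := by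
  have hsc := Real.sin_sq_add_cos_sq (π / 8)
  have hr : √2 ^ 2 = 2 := Real.sq_sqrt (by norm_num)
  fin_cases i <;> fin_cases j <;>
    simp only [tau, inn_prod3, ket0_eq_ofReal, ket1_eq_ofReal, ketP, ketM, ket0b, ket1b, ketPb,
      ketMb, inn_ofReal] <;>
    norm_cast <;> simp [-Real.cos_pi_div_eight, -Real.sin_pi_div_eight] <;> field_simp <;>
    nlinarith [hsc, hr]

lemma Gam_mulVec_tau (j : Fin 4) : Gam *ᵥ tau j = 0 := by
  simp only [Gam, sub_mulVec, one_mulVec, sum_mulVec, proj_mulVec, inn_tau, ite_smul, one_smul,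
    zero_smul, Finset.sum_ite_eq', Finset.mem_univ, if_true, sub_self]

def tauFactor : Fin 4 → Fin 3 → Fin 2 → ℂ :=
  ![![ket0b, ket1, ketP], ![ketPb, ket0, ket1], ![ket1b, ketP, ket0], ![ketMb, ketM, ketM]]

lemma tau_eq_prod3 (j : Fin 4) :
    tau j = prod3 (tauFactor j 0) (tauFactor j 1) (tauFactor j 2) := by
  fin_cases j <;> rfl

lemma star_tau_dotProduct_kronecker_mulVec_tau (A B C : Matrix (Fin 2) (Fin 2) ℂ) (j : Fin 4) :
    star (tau j) ⬝ᵥ (A ⊗ₖ (B ⊗ₖ C)) *ᵥ tau j =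
      ∏ k, star (tauFactor j k) ⬝ᵥ ![A, B, C] k *ᵥ tauFactor j k := by
  rw [tau_eq_prod3, kronecker_mulVec_prod3, Fin.prod_univ_three]
  exact inn_prod3 _ _ _ _ _ _

lemma tauFactor_det_ne_zero {j j' : Fin 4} (h : j ≠ j') (k : Fin 3) :
    (Matrix.of ![tauFactor j k, tauFactor j' k]).det ≠ 0 := by
  have hs : 0 < Real.sin (π / 8) :=
    Real.sin_pos_of_pos_of_lt_pi (by positivity) (by linarith [pi_pos])
  have hc : 0 < Real.cos (π / 8) :=
    Real.cos_pos_of_mem_Ioo ⟨by linarith [pi_pos], by linarith [pi_pos]⟩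
  have hs_lt_c : Real.sin (π / 8) < Real.cos (π / 8) := by
    rw [← Real.sin_pi_div_two_sub]
    exact Real.sin_lt_sin_of_lt_of_le_pi_div_two (by linarith [pi_pos]) (by linarith [pi_pos])
      (by linarith [pi_pos])
  have hr : 0 < 1 / √2 := by positivity
  fin_cases j <;> fin_cases j' <;> fin_cases k <;> simp [tauFactor, det_fin_two] at h ⊢ <;>
    simp only [ket0_eq_ofReal, ket1_eq_ofReal, ketP, ketM, ket0b, ket1b, ketPb, ketMb,
      cons_val_zero, cons_val_one] <;>
    norm_cast <;> nlinarith

/-- The state `ρ = Γ/4` is entangled: it is not a convex combination of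
product states `ρ_A ⊗ ρ_B ⊗ ρ_C`. -/
theorem stmt_6 :
    ¬ ∃ (m : ℕ) (p : Fin m → ℝ)
        (ρA ρB ρC : Fin m → Matrix (Fin 2) (Fin 2) ℂ),
      (∀ i, 0 ≤ p i) ∧ (∑ i, p i = 1) ∧
      (∀ i, (ρA i).PosSemidef ∧ (ρA i).trace = 1) ∧
      (∀ i, (ρB i).PosSemidef ∧ (ρB i).trace = 1) ∧
      (∀ i, (ρC i).PosSemidef ∧ (ρC i).trace = 1) ∧
      (1 / 4 : ℂ) • Gam = ∑ i, (p i : ℂ) • (ρA i ⊗ₖ (ρB i ⊗ₖ ρC i)) := by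
  rintro ⟨m, p, ρA, ρB, ρC, hp, hp_sum, hA, hB, hC, hsep⟩
  obtain ⟨i, -, hi⟩ := Finset.exists_ne_zero_of_sum_ne_zero (hp_sum ▸ one_ne_zero : ∑ i, p i ≠ 0)
  set ρ : Fin 3 → Matrix (Fin 2) (Fin 2) ℂ := ![ρA i, ρB i, ρC i]
  have hρ (k : Fin 3) : (ρ k).PosSemidef ∧ (ρ k).trace = 1 := by
    fin_cases k
    exacts [hA i, hB i, hC i]
  have hvanish (j : Fin 4) : ∃ k, star (tauFactor j k) ⬝ᵥ ρ k *ᵥ tauFactor j k = 0 := by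
    have h := dotProduct_mulVec_eq_zero_of_sum_smul hp
      (fun i => (hA i).1.kronecker ((hB i).1.kronecker (hC i).1)) (v := tau j)
      (by rw [← hsep, smul_mulVec, Gam_mulVec_tau, smul_zero, dotProduct_zero]) hi
    rw [star_tau_dotProduct_kronecker_mulVec_tau, Finset.prod_eq_zero_iff] at h
    obtain ⟨k, -, hk⟩ := h
    exact ⟨k, hk⟩
  choose f hf using hvanish
  obtain ⟨j, j', hjj', hfj⟩ := Fintype.exists_ne_map_eq_of_card_lt f (by simp)
  have hρ_zero : ρ (f j) = 0 :=
    eq_zero_of_mulVec_eq_zero_of_det_ne_zero (tauFactor_det_ne_zero hjj' (f j))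
      (((hρ _).1.dotProduct_mulVec_zero_iff _).mp (hf j))
      (((hρ _).1.dotProduct_mulVec_zero_iff _).mp (hfj ▸ hf j'))
  simpa [hρ_zero] using (hρ (f j)).2
end
end

section
/- For each l = l₁l₂l₃ ∈ {0,1}³, the Bell operator Î_l = 2(−1)^{l₁}(A₀+A₁)⊗B₁⊗C₁ + (−1)^{l₁+l₂}(A₀−A₁)⊗B₀⊗1 + (−1)^{l₁+l₃}(A₀−A₁)⊗1⊗C₀, where A₀,A₁,B₀,B₁,C₀,C₁ are arbitrary Hermitian operators squaring to the identity on finite-dimensional Hilbert spaces H_A, H_B, H_C, satisfies Î_l ≤ 4√2 · 1. -/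
/-! The sign pattern `l` can be absorbed into the observables `B₀`, `B₁`, `C₀`, so it suffices
to bound `Î = 2(A₀+A₁)⊗B₁⊗C₁ + (A₀−A₁)⊗B₀⊗1 + (A₀−A₁)⊗1⊗C₀`. With `t = 2√2`,
`X = 2B₁⊗C₁ + B₀⊗1 + 1⊗C₀` and `Y = 2B₁⊗C₁ − B₀⊗1 − 1⊗C₀` one has the sum of squares
`(t − A₀⊗X)² + (t − A₁⊗Y)² + 2(1 − 1⊗B₀⊗C₀)² = 2t(4√2 − Î)`:
in `X² + Y²` all anticommutator terms cancel except `4·B₀⊗C₀`, which the last square absorbs. -/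

open Matrix
open scoped ComplexOrder Kronecker

namespace Matrix

variable {l m n p R : Type*}

theorem sub_kronecker [NonUnitalNonAssocRing R] (A₁ A₂ : Matrix l m R) (B : Matrix n p R) :
    (A₁ - A₂) ⊗ₖ B = A₁ ⊗ₖ B - A₂ ⊗ₖ B :=
  ext fun _ _ => sub_mul _ _ _

theorem kronecker_sub [NonUnitalNonAssocRing R] (A : Matrix l m R) (B₁ B₂ : Matrix n p R) :
    A ⊗ₖ (B₁ - B₂) = A ⊗ₖ B₁ - A ⊗ₖ B₂ :=
  ext fun _ _ => mul_sub _ _ _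

theorem IsHermitian.kronecker [CommMagma R] [StarMul R] {A : Matrix l l R} {B : Matrix m m R}
    (hA : A.IsHermitian) (hB : B.IsHermitian) : (A ⊗ₖ B).IsHermitian :=
  (conjTranspose_kronecker A B).trans (by rw [hA.eq, hB.eq])

theorem IsHermitian.neg_one_pow_smul [CommRing R] [StarRing R] {B : Matrix n n R}
    (hB : B.IsHermitian) (k : ℕ) : ((-1 : R) ^ k • B).IsHermitian :=
  hB.smul ((IsSelfAdjoint.one R).neg.pow k)

theorem IsHermitian.posSemidef_mul_self [Fintype n] [CommRing R] [PartialOrder R] [StarRing R]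
    [StarOrderedRing R] {H : Matrix n n R} (hH : H.IsHermitian) : (H * H).PosSemidef := by
  simpa only [hH.eq] using posSemidef_conjTranspose_mul_self H

end Matrix

theorem neg_one_pow_smul_mul_self {R A : Type*} [CommRing R] [Ring A] [Algebra R A] {a : A}
    (ha : a * a = 1) (k : ℕ) : ((-1 : R) ^ k • a) * ((-1 : R) ^ k • a) = 1 := by
  rw [smul_mul_smul, ← mul_pow, neg_one_mul, neg_neg, one_pow, one_smul, ha]

section Bell

variable {nA nB nC : Type*} [Fintype nA] [Fintype nB] [Fintype nC]
  [DecidableEq nA] [DecidableEq nB] [DecidableEq nC]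

def bellOperator {R : Type*} [CommRing R] (A0 A1 : Matrix nA nA R) (B0 B1 : Matrix nB nB R)
    (C0 C1 : Matrix nC nC R) : Matrix (nA × nB × nC) (nA × nB × nC) R :=
  (2 : R) • ((A0 + A1) ⊗ₖ (B1 ⊗ₖ C1)) + (A0 - A1) ⊗ₖ (B0 ⊗ₖ 1) + (A0 - A1) ⊗ₖ (1 ⊗ₖ C0)

theorem bellOperator_sum_sq {R : Type*} [CommRing R]
    {A0 A1 : Matrix nA nA R} {B0 B1 : Matrix nB nB R} {C0 C1 : Matrix nC nC R}
    (hA0 : A0 * A0 = 1) (hA1 : A1 * A1 = 1) (hB0 : B0 * B0 = 1) (hB1 : B1 * B1 = 1)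
    (hC0 : C0 * C0 = 1) (hC1 : C1 * C1 = 1) (t : R) :
    let H0 := t • 1 - A0 ⊗ₖ ((2 : R) • (B1 ⊗ₖ C1) + B0 ⊗ₖ 1 + 1 ⊗ₖ C0)
    let H1 := t • 1 - A1 ⊗ₖ ((2 : R) • (B1 ⊗ₖ C1) - B0 ⊗ₖ 1 - 1 ⊗ₖ C0)
    let H2 : Matrix (nA × nB × nC) (nA × nB × nC) R := 1 - 1 ⊗ₖ (B0 ⊗ₖ C0)
    H0 * H0 + H1 * H1 + (2 : R) • (H2 * H2) =
      (2 * t ^ 2 + 16) • 1 - (2 * t) • bellOperator A0 A1 B0 B1 C0 C1 := by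
  intro H0 H1 H2
  simp only [H0, H1, H2, bellOperator, mul_sub, sub_mul, mul_add, add_mul, smul_mul_assoc,
    mul_smul_comm, ← mul_kronecker_mul, Matrix.one_mul, Matrix.mul_one, add_kronecker,
    kronecker_add, sub_kronecker, kronecker_sub, kronecker_smul, one_kronecker_one,
    hA0, hA1, hB0, hB1, hC0, hC1]
  match_scalars <;> ring

theorem bellOperator_posSemidef
    {A0 A1 : Matrix nA nA ℂ} {B0 B1 : Matrix nB nB ℂ} {C0 C1 : Matrix nC nC ℂ}
    (hA0 : A0.IsHermitian) (hA1 : A1.IsHermitian) (hB0 : B0.IsHermitian) (hB1 : B1.IsHermitian)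
    (hC0 : C0.IsHermitian) (hC1 : C1.IsHermitian)
    (hA0sq : A0 * A0 = 1) (hA1sq : A1 * A1 = 1) (hB0sq : B0 * B0 = 1) (hB1sq : B1 * B1 = 1)
    (hC0sq : C0 * C0 = 1) (hC1sq : C1 * C1 = 1) :
    (((4 * √2 : ℝ) : ℂ) • 1 - bellOperator A0 A1 B0 B1 C0 C1).PosSemidef := by
  set t : ℂ := ((2 * √2 : ℝ) : ℂ)
  have ht : IsSelfAdjoint t := Complex.conj_ofReal _
  have hId : (1 : Matrix (nA × nB × nC) (nA × nB × nC) ℂ).IsHermitian := isHermitian_one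
  have hB1C1 := (hB1.kronecker hC1).smul (IsSelfAdjoint.ofNat 2 : IsSelfAdjoint (2 : ℂ))
  have hB0C := hB0.kronecker (isHermitian_one (n := nC))
  have hBC0 := (isHermitian_one (n := nB)).kronecker hC0
  have hH0 := (hId.smul ht).sub (hA0.kronecker ((hB1C1.add hB0C).add hBC0))
  have hH1 := (hId.smul ht).sub (hA1.kronecker ((hB1C1.sub hB0C).sub hBC0))
  have hH2 := hId.sub ((isHermitian_one (n := nA)).kronecker (hB0.kronecker hC0))
  have hsum := bellOperator_sum_sq hA0sq hA1sq hB0sq hB1sq hC0sq hC1sq t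
  dsimp only at hsum
  have ht0 : 2 * t ≠ 0 := by simp [t]
  have hinv : (0 : ℂ) ≤ (2 * t)⁻¹ := by
    simp only [t, ← Complex.ofReal_ofNat, ← Complex.ofReal_mul, ← Complex.ofReal_inv]
    exact Complex.zero_le_real.mpr (by positivity)
  have hscalar : (2 * t)⁻¹ * (2 * t ^ 2 + 16) = ((4 * √2 : ℝ) : ℂ) := by
    have h : (2 * (2 * √2))⁻¹ * (2 * (2 * √2) ^ 2 + 16) = 4 * √2 := by
      field_simp
      linear_combination (-8) * Real.sq_sqrt zero_le_two
    simp only [t]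
    exact_mod_cast h
  rw [← hscalar, ← inv_smul_smul₀ ht0 (bellOperator A0 A1 B0 B1 C0 C1), ← smul_smul,
    ← smul_sub, ← hsum]
  exact ((hH0.posSemidef_mul_self.add hH1.posSemidef_mul_self).add
    (hH2.posSemidef_mul_self.smul zero_le_two)).smul hinv

end Bell

/-- For Hermitian observables squaring to the identity, the Bell operator
`Î_l = 2(−1)^{l₁}(A₀+A₁)⊗B₁⊗C₁ + (−1)^{l₁+l₂}(A₀−A₁)⊗B₀⊗1 + (−1)^{l₁+l₃}(A₀−A₁)⊗1⊗C₀`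
satisfies `Î_l ≤ 4√2·1`. -/
theorem stmt_7 {nA nB nC : Type*}
    [Fintype nA] [Fintype nB] [Fintype nC]
    [DecidableEq nA] [DecidableEq nB] [DecidableEq nC]
    (A0 A1 : Matrix nA nA ℂ) (B0 B1 : Matrix nB nB ℂ) (C0 C1 : Matrix nC nC ℂ)
    (hA0 : A0.IsHermitian) (hA1 : A1.IsHermitian)
    (hB0 : B0.IsHermitian) (hB1 : B1.IsHermitian)
    (hC0 : C0.IsHermitian) (hC1 : C1.IsHermitian)
    (hA0sq : A0 * A0 = 1) (hA1sq : A1 * A1 = 1)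
    (hB0sq : B0 * B0 = 1) (hB1sq : B1 * B1 = 1)
    (hC0sq : C0 * C0 = 1) (hC1sq : C1 * C1 = 1)
    (l1 l2 l3 : Fin 2) :
    (((4 * Real.sqrt 2 : ℝ) : ℂ) • (1 : Matrix (nA × nB × nC) (nA × nB × nC) ℂ)
      - ((2 * (-1 : ℂ) ^ (l1 : ℕ)) • ((A0 + A1) ⊗ₖ (B1 ⊗ₖ C1))
          + ((-1 : ℂ) ^ ((l1 : ℕ) + (l2 : ℕ))) • ((A0 - A1) ⊗ₖ (B0 ⊗ₖ (1 : Matrix nC nC ℂ)))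
          + ((-1 : ℂ) ^ ((l1 : ℕ) + (l3 : ℕ))) • ((A0 - A1) ⊗ₖ ((1 : Matrix nB nB ℂ) ⊗ₖ C0)))).PosSemidef := by
  have h := bellOperator_posSemidef hA0 hA1 (hB0.neg_one_pow_smul (l1 + l2))
    (hB1.neg_one_pow_smul l1) (hC0.neg_one_pow_smul (l1 + l3)) hC1 hA0sq hA1sq
    (neg_one_pow_smul_mul_self hB0sq _) (neg_one_pow_smul_mul_self hB1sq _)
    (neg_one_pow_smul_mul_self hC0sq _) hC1sq
  convert h using 2
  simp only [bellOperator, kronecker_smul, smul_kronecker, smul_smul]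
end

section
/- The sum-of-squares identity 4√2·1 − Î_l = √2(1 − P₁)² + (1/√2)[(1 − P₂)² + (1 − P₃)²] holds, where Î_l is the Bell operator of the modified inequality, P₁ = (−1)^{l₁}((A₀+A₁)/√2)⊗B₁⊗C₁, P₂ = (−1)^{l₁+l₂}((A₀−A₁)/√2)⊗B₀⊗1, P₃ = (−1)^{l₁+l₃}((A₀−A₁)/√2)⊗1⊗C₀. -/
open Matrix
open scoped Kronecker

noncomputable section

/-- The sum-of-squares identity
`4√2·1 − Î_l = √2(1 − P₁)² + (1/√2)[(1 − P₂)² + (1 − P₃)²]`. -/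
theorem stmt_8 {nA nB nC : Type*}
    [Fintype nA] [Fintype nB] [Fintype nC]
    [DecidableEq nA] [DecidableEq nB] [DecidableEq nC]
    (A0 A1 : Matrix nA nA ℂ) (B0 B1 : Matrix nB nB ℂ) (C0 C1 : Matrix nC nC ℂ)
    (hA0 : A0.IsHermitian) (hA1 : A1.IsHermitian)
    (hB0 : B0.IsHermitian) (hB1 : B1.IsHermitian)
    (hC0 : C0.IsHermitian) (hC1 : C1.IsHermitian)
    (hA0sq : A0 * A0 = 1) (hA1sq : A1 * A1 = 1)
    (hB0sq : B0 * B0 = 1) (hB1sq : B1 * B1 = 1)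
    (hC0sq : C0 * C0 = 1) (hC1sq : C1 * C1 = 1)
    (l1 l2 l3 : Fin 2) :
    letI one : Matrix (nA × nB × nC) (nA × nB × nC) ℂ := 1
    letI P1 := ((-1 : ℂ) ^ (l1 : ℕ) * (1 / Real.sqrt 2 : ℝ)) • ((A0 + A1) ⊗ₖ (B1 ⊗ₖ C1))
    letI P2 := ((-1 : ℂ) ^ ((l1 : ℕ) + (l2 : ℕ)) * (1 / Real.sqrt 2 : ℝ)) •
      ((A0 - A1) ⊗ₖ (B0 ⊗ₖ (1 : Matrix nC nC ℂ)))
    letI P3 := ((-1 : ℂ) ^ ((l1 : ℕ) + (l3 : ℕ)) * (1 / Real.sqrt 2 : ℝ)) •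
      ((A0 - A1) ⊗ₖ ((1 : Matrix nB nB ℂ) ⊗ₖ C0))
    letI Ihat := (2 * (-1 : ℂ) ^ (l1 : ℕ)) • ((A0 + A1) ⊗ₖ (B1 ⊗ₖ C1))
      + ((-1 : ℂ) ^ ((l1 : ℕ) + (l2 : ℕ))) • ((A0 - A1) ⊗ₖ (B0 ⊗ₖ (1 : Matrix nC nC ℂ)))
      + ((-1 : ℂ) ^ ((l1 : ℕ) + (l3 : ℕ))) • ((A0 - A1) ⊗ₖ ((1 : Matrix nB nB ℂ) ⊗ₖ C0))
    ((4 * Real.sqrt 2 : ℝ) : ℂ) • one - Ihat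
      = ((Real.sqrt 2 : ℝ) : ℂ) • ((one - P1) * (one - P1))
        + ((1 / Real.sqrt 2 : ℝ) : ℂ) •
            ((one - P2) * (one - P2) + (one - P3) * (one - P3)) := by

  have hs2 : ((Real.sqrt 2 : ℝ) : ℂ) * ((Real.sqrt 2 : ℝ) : ℂ) = 2 := by
    rw [← Complex.ofReal_mul, Real.mul_self_sqrt (by norm_num)]
    norm_num
  have hc : ((1 / Real.sqrt 2 : ℝ) : ℂ) = ((Real.sqrt 2 : ℝ) : ℂ) / 2 := by
    have h : (1 / Real.sqrt 2 : ℝ) = Real.sqrt 2 / 2 := by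
      rw [div_eq_div_iff (Real.sqrt_pos.mpr (by norm_num)).ne' (by norm_num), one_mul,
        Real.mul_self_sqrt (by norm_num)]
    rw [h]; push_cast; ring
  have hX : ((A0 + A1) ⊗ₖ (B1 ⊗ₖ C1)) * ((A0 + A1) ⊗ₖ (B1 ⊗ₖ C1))
      = (2:ℂ) • 1 + (A0*A1 + A1*A0) ⊗ₖ ((1:Matrix nB nB ℂ) ⊗ₖ (1:Matrix nC nC ℂ)) := by
    rw [← Matrix.mul_kronecker_mul, ← Matrix.mul_kronecker_mul, hB1sq, hC1sq]
    have h : (A0+A1)*(A0+A1) = (2:ℂ)•1 + (A0*A1+A1*A0) := by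
      simp only [add_mul, mul_add, hA0sq, hA1sq]; module
    rw [h, Matrix.add_kronecker, Matrix.smul_kronecker, Matrix.one_kronecker_one,
      Matrix.one_kronecker_one]
  have hY : ((A0 - A1) ⊗ₖ (B0 ⊗ₖ (1 : Matrix nC nC ℂ))) * ((A0 - A1) ⊗ₖ (B0 ⊗ₖ (1 : Matrix nC nC ℂ)))
      = (2:ℂ) • 1 + ((-1:ℂ)) • ((A0*A1 + A1*A0) ⊗ₖ ((1:Matrix nB nB ℂ) ⊗ₖ (1:Matrix nC nC ℂ))) := by
    rw [← Matrix.mul_kronecker_mul, ← Matrix.mul_kronecker_mul, hB0sq, one_mul]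
    have h : (A0-A1)*(A0-A1) = (2:ℂ)•1 + ((-1:ℂ))•(A0*A1+A1*A0) := by
      simp only [sub_mul, mul_sub, hA0sq, hA1sq]; module
    rw [h, Matrix.add_kronecker, Matrix.smul_kronecker, Matrix.smul_kronecker,
      Matrix.one_kronecker_one, Matrix.one_kronecker_one]
  have hZ : ((A0 - A1) ⊗ₖ ((1 : Matrix nB nB ℂ) ⊗ₖ C0)) * ((A0 - A1) ⊗ₖ ((1 : Matrix nB nB ℂ) ⊗ₖ C0))
      = (2:ℂ) • 1 + ((-1:ℂ)) • ((A0*A1 + A1*A0) ⊗ₖ ((1:Matrix nB nB ℂ) ⊗ₖ (1:Matrix nC nC ℂ))) := by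
    rw [← Matrix.mul_kronecker_mul, ← Matrix.mul_kronecker_mul, hC0sq, one_mul]
    have h : (A0-A1)*(A0-A1) = (2:ℂ)•1 + ((-1:ℂ))•(A0*A1+A1*A0) := by
      simp only [sub_mul, mul_sub, hA0sq, hA1sq]; module
    rw [h, Matrix.add_kronecker, Matrix.smul_kronecker, Matrix.smul_kronecker,
      Matrix.one_kronecker_one, Matrix.one_kronecker_one]
  rw [hc]
  fin_cases l1 <;> fin_cases l2 <;> fin_cases l3 <;>
    simp only [Fin.isValue, Fin.val_zero, Fin.val_one, pow_zero, pow_one, Nat.add_zero,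
      Nat.zero_add, one_mul, neg_one_mul, neg_smul, neg_neg, mul_one, mul_neg,
      sub_neg_eq_add, sub_mul, mul_sub, add_mul, mul_add, smul_mul_assoc, mul_smul_comm,
      smul_smul, Matrix.one_mul, Matrix.mul_one, hX, hY, hZ] <;>
    match_scalars <;>
    first
      | ring1
      | linear_combination hs2
      | linear_combination -hs2
      | linear_combination (1/2 : ℂ) * hs2
      | linear_combination (-1/2 : ℂ) * hs2
      | linear_combination ((Real.sqrt 2 : ℝ) : ℂ) * hs2
      | linear_combination (-((Real.sqrt 2 : ℝ) : ℂ)) * hs2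
      | linear_combination (((Real.sqrt 2 : ℝ) : ℂ)/2) * hs2
      | linear_combination (-((Real.sqrt 2 : ℝ) : ℂ)/2) * hs2
      | linear_combination (((Real.sqrt 2 : ℝ) : ℂ)/4) * hs2
      | linear_combination (-((Real.sqrt 2 : ℝ) : ℂ)/4) * hs2
end
end

section
/- For each l ∈ {0,1}³, the GHZ-like state |φ_l⟩ = (|l₁l₂l₃⟩ + (−1)^{l₁}|l̄₁l̄₂l̄₃⟩)/√2 together with the observables A₀=(X+Z)/√2, A₁=(X−Z)/√2, B₀=C₀=Z, B₁=C₁=X achieves ⟨φ_l| Î_l |φ_l⟩ = 4√2, where Î_l is the Bell operator 2(−1)^{l₁}(A₀+A₁)⊗B₁⊗C₁ + (−1)^{l₁+l₂}(A₀−A₁)⊗B₀⊗1 + (−1)^{l₁+l₃}(A₀−A₁)⊗1⊗C₀. -/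
open Matrix Finset Real
open scoped ComplexOrder Kronecker

noncomputable section

/-- Bit flip on `Fin 2`. -/
def flip2 (i : Fin 2) : Fin 2 := if i = 0 then 1 else 0

/-- The GHZ-like state `|φ_l⟩ = (|l₁l₂l₃⟩ + (-1)^{l₁} |l̄₁l̄₂l̄₃⟩)/√2`. -/
def ghz (l : Q3) : Q3 → ℂ := fun x =>
  (1 / Real.sqrt 2 : ℝ) *
    ((if x = l then 1 else 0)
      + (-1 : ℂ) ^ (l.1 : ℕ) *
        (if x = (flip2 l.1, flip2 l.2.1, flip2 l.2.2) then 1 else 0))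

lemma key (M : Matrix Q3 Q3 ℂ) (i j : Q3) (c s : ℂ) :
    inn (fun x => c * ((if x = i then 1 else 0) + s * (if x = j then 1 else 0)))
        (M.mulVec (fun x => c * ((if x = i then 1 else 0) + s * (if x = j then 1 else 0))))
      = star c * c * ((M i i + star s * s * M j j) + (s * M i j + star s * M j i)) := by
  simp only [inn, Matrix.mulVec, dotProduct, mul_add, add_mul, mul_ite, ite_mul,
    mul_one, mul_zero, one_mul, zero_mul, Finset.sum_add_distrib, Finset.sum_ite_eq',
    Finset.mem_univ, if_true, star_mul', star_add, apply_ite (star (R := ℂ)), star_one, star_zero]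
  ring

set_option maxHeartbeats 1000000 in
/-- The GHZ-like state `|φ_l⟩` with the ideal observables achieves the value
`4√2` of the Bell operator `Î_l`. -/
theorem stmt_9 (l1 l2 l3 : Fin 2) :
    letI A0 : Matrix (Fin 2) (Fin 2) ℂ := ((1 / Real.sqrt 2 : ℝ) : ℂ) • (PX + PZ)
    letI A1 : Matrix (Fin 2) (Fin 2) ℂ := ((1 / Real.sqrt 2 : ℝ) : ℂ) • (PX - PZ)
    letI Ihat : Matrix Q3 Q3 ℂ :=
      (2 * (-1 : ℂ) ^ (l1 : ℕ)) • ((A0 + A1) ⊗ₖ (PX ⊗ₖ PX))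
        + ((-1 : ℂ) ^ ((l1 : ℕ) + (l2 : ℕ))) • ((A0 - A1) ⊗ₖ (PZ ⊗ₖ (1 : Matrix (Fin 2) (Fin 2) ℂ)))
        + ((-1 : ℂ) ^ ((l1 : ℕ) + (l3 : ℕ))) • ((A0 - A1) ⊗ₖ ((1 : Matrix (Fin 2) (Fin 2) ℂ) ⊗ₖ PZ))
    inn (ghz (l1, l2, l3)) (Ihat.mulVec (ghz (l1, l2, l3)))
      = ((4 * Real.sqrt 2 : ℝ) : ℂ) := by
  have h2 : (Real.sqrt 2 : ℂ) * (Real.sqrt 2 : ℂ) = 2 := by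
    norm_cast
    exact Real.mul_self_sqrt (by norm_num)
  have hg : ghz (l1, l2, l3) = fun x =>
      ((1 / Real.sqrt 2 : ℝ) : ℂ) * ((if x = (l1, l2, l3) then 1 else 0)
        + (-1 : ℂ) ^ (l1 : ℕ) * (if x = (flip2 l1, flip2 l2, flip2 l3) then 1 else 0)) := rfl
  rw [hg, key]
  fin_cases l1 <;> fin_cases l2 <;> fin_cases l3 <;>
    simp only [flip2, PX, PZ, Matrix.kroneckerMap_apply, Matrix.smul_apply,
      Matrix.add_apply, Matrix.sub_apply, Matrix.one_apply,
      Matrix.cons_val_zero, Matrix.cons_val_one, Matrix.head_cons, Matrix.head_fin_const] <;>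
    norm_num [Complex.star_def, Complex.conj_ofReal]
  all_goals {
    have hne : (Real.sqrt 2 : ℂ) ≠ 0 := fun h => by simp [h] at h2
    field_simp
    linear_combination (-4*(Real.sqrt 2:ℂ)*(Real.sqrt 2:ℂ) - 8) * h2 }
end
end

section
/- Let |ψ⟩ be a state in H_A⊗H_B⊗H_C⊗H_G whose reduced density matrix on H_A is full rank, and let A₀, A₁ be Hermitian unitary operators on H_A, and B₁ on H_B, C₁ on H_C Hermitian unitaries, such that (A₀+A₁)/√2 ⊗ B₁ ⊗ C₁ ⊗ 1 |ψ⟩ = ±|ψ⟩. Then A₀ and A₁ anticommute: A₀A₁ + A₁A₀ = 0. -/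
/-! Squaring the eigen-equation gives `M² ψ = ψ` for `M = (A₀ + A₁)/√2 ⊗ B₁ ⊗ C₁ ⊗ 1`. Since
`B₁, C₁` are involutions, `M² = ½ (A₀ + A₁)² ⊗ 1 = 1 + ½ {A₀, A₁} ⊗ 1`, so `{A₀, A₁} ⊗ 1`
kills `ψ`. Reading `ψ` as a matrix `Ψ : H_A → H_B ⊗ H_C ⊗ H_G`, this says `{A₀, A₁} Ψ = 0`, hence
`{A₀, A₁} Ψ Ψᴴ = 0`; and `Ψ Ψᴴ` is the reduced density matrix, which is invertible. -/

open Matrix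
open scoped Kronecker

theorem add_mul_self_of_mul_self_eq_one {α : Type*} [Ring α] {a b : α}
    (ha : a * a = 1) (hb : b * b = 1) : (a + b) * (a + b) = 2 + (a * b + b * a) := by
  rw [add_mul, mul_add, mul_add, ha, hb, one_add_one_eq_two.symm]
  abel

namespace Matrix

variable {R : Type*} {m n : Type*} [Fintype m] [Fintype n] [DecidableEq n]

theorem kronecker_mul_self_eq_one [CommRing R] [DecidableEq m] {B : Matrix m m R}
    {C : Matrix n n R} (hB : B * B = 1) (hC : C * C = 1) : (B ⊗ₖ C) * (B ⊗ₖ C) = 1 := by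
  rw [← mul_kronecker_mul, hB, hC, one_kronecker_one]

theorem kronecker_mul_self_of_mul_self_eq_one [CommRing R] (A : Matrix m m R)
    {K : Matrix n n R} (hK : K * K = 1) :
    (A ⊗ₖ K) * (A ⊗ₖ K) = (A * A) ⊗ₖ (1 : Matrix n n R) := by
  rw [← mul_kronecker_mul, hK]

theorem mul_self_sub_one_mulVec_eq_zero [CommRing R] [DecidableEq m] {M : Matrix m m R}
    {ψ : m → R} {ε : R} (hM : M *ᵥ ψ = ε • ψ) (hε : ε * ε = 1) :
    (M * M - 1) *ᵥ ψ = 0 := by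
  rw [sub_mulVec, one_mulVec, ← mulVec_mulVec, hM, mulVec_smul, hM, smul_smul, hε, one_smul,
    sub_self]

/-- `ψ` is `vec Ψᵀ` for `Ψ = of (curry ψ)`, so `(D ⊗ 1) ψ = vec (D Ψ)ᵀ`. -/
theorem kronecker_one_mulVec_eq_zero_iff [CommSemiring R] (D : Matrix m m R) (ψ : m × n → R) :
    (D ⊗ₖ (1 : Matrix n n R)) *ᵥ ψ = 0 ↔ D * of (Function.curry ψ) = 0 := by
  have h := kronecker_mulVec_vec (1 : Matrix n n R) (of (Function.curry ψ))ᵀ D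
  rw [Matrix.one_mul, ← transpose_mul] at h
  change _ *ᵥ vec (of (Function.curry ψ))ᵀ = 0 ↔ _
  rw [h, ← vec_zero, vec_inj, ← transpose_zero, transpose_inj]

theorem smul_add_kronecker_mul_self [CommRing R] [DecidableEq m] {A₀ A₁ : Matrix m m R}
    {K : Matrix n n R} (hA₀ : A₀ * A₀ = 1) (hA₁ : A₁ * A₁ = 1) (hK : K * K = 1) {c : R}
    (hc : c * c * 2 = 1) :
    (c • ((A₀ + A₁) ⊗ₖ K)) * (c • ((A₀ + A₁) ⊗ₖ K)) =
      1 + (c * c) • ((A₀ * A₁ + A₁ * A₀) ⊗ₖ (1 : Matrix n n R)) := by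
  have h2 : (2 : Matrix m m R) ⊗ₖ (1 : Matrix n n R) = (2 : R) • 1 := by
    rw [← one_add_one_eq_two, add_kronecker, one_kronecker_one, two_smul]
  rw [Matrix.smul_mul, Matrix.mul_smul, smul_smul, kronecker_mul_self_of_mul_self_eq_one _ hK,
    add_mul_self_of_mul_self_eq_one hA₀ hA₁, add_kronecker, smul_add, h2, smul_smul, hc,
    one_smul]

end Matrix

theorem stmt_10_general {nA nB nC nG : Type*}
    [Fintype nA] [Fintype nB] [Fintype nC] [Fintype nG]
    [DecidableEq nA] [DecidableEq nB] [DecidableEq nC] [DecidableEq nG]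
    (ψ : nA × nB × nC × nG → ℂ)
    (A0 A1 : Matrix nA nA ℂ) (B1 : Matrix nB nB ℂ) (C1 : Matrix nC nC ℂ)
    (hA0sq : A0 * A0 = 1) (hA1sq : A1 * A1 = 1)
    (hB1sq : B1 * B1 = 1) (hC1sq : C1 * C1 = 1)
    (hfull : (Matrix.of fun i i' : nA =>
        ∑ x : nB × nC × nG, ψ (i, x) * star (ψ (i', x))).det ≠ 0)
    (ε : ℂ) (hε : ε = 1 ∨ ε = -1)
    (heig : ((((1 / Real.sqrt 2 : ℝ) : ℂ) • ((A0 + A1) ⊗ₖ (B1 ⊗ₖ (C1 ⊗ₖ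
        (1 : Matrix nG nG ℂ))))).mulVec ψ) = ε • ψ) :
    A0 * A1 + A1 * A0 = 0 := by
  set Ψ : Matrix nA (nB × nC × nG) ℂ := of (Function.curry ψ)
  have hK : (B1 ⊗ₖ (C1 ⊗ₖ (1 : Matrix nG nG ℂ))) * (B1 ⊗ₖ (C1 ⊗ₖ 1)) = 1 :=
    kronecker_mul_self_eq_one hB1sq (kronecker_mul_self_eq_one hC1sq (Matrix.one_mul 1))
  have hc : ((1 / Real.sqrt 2 : ℝ) : ℂ) * ((1 / Real.sqrt 2 : ℝ) : ℂ) * 2 = 1 := by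
    norm_cast
    field_simp
    exact (Real.sq_sqrt zero_le_two).symm
  have hker := mul_self_sub_one_mulVec_eq_zero heig (by rcases hε with rfl | rfl <;> norm_num)
  rw [smul_add_kronecker_mul_self hA0sq hA1sq hK hc, add_sub_cancel_left, smul_mulVec,
    smul_eq_zero, kronecker_one_mulVec_eq_zero_iff] at hker
  have hΨ : (A0 * A1 + A1 * A0) * Ψ = 0 := hker.resolve_left (by norm_num)
  have hρ : IsUnit (Ψ * Ψᴴ) := (isUnit_iff_isUnit_det _).2 (isUnit_iff_ne_zero.2 hfull)
  exact hρ.mul_left_eq_zero.1 (by rw [← Matrix.mul_assoc, hΨ, Matrix.zero_mul])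

/-- If `(A₀+A₁)/√2 ⊗ B₁ ⊗ C₁ ⊗ 1 |ψ⟩ = ±|ψ⟩` for Hermitian unitaries and the
reduced state of `|ψ⟩` on `H_A` is full rank, then `A₀` and `A₁` anticommute. -/
theorem stmt_10 {nA nB nC nG : Type*}
    [Fintype nA] [Fintype nB] [Fintype nC] [Fintype nG]
    [DecidableEq nA] [DecidableEq nB] [DecidableEq nC] [DecidableEq nG]
    (ψ : nA × nB × nC × nG → ℂ)
    (A0 A1 : Matrix nA nA ℂ) (B1 : Matrix nB nB ℂ) (C1 : Matrix nC nC ℂ)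
    (hA0 : A0.IsHermitian) (hA1 : A1.IsHermitian)
    (hB1 : B1.IsHermitian) (hC1 : C1.IsHermitian)
    (hA0sq : A0 * A0 = 1) (hA1sq : A1 * A1 = 1)
    (hB1sq : B1 * B1 = 1) (hC1sq : C1 * C1 = 1)
    (hfull : (Matrix.of fun i i' : nA =>
        ∑ x : nB × nC × nG, ψ (i, x) * star (ψ (i', x))).det ≠ 0)
    (ε : ℂ) (hε : ε = 1 ∨ ε = -1)
    (heig : ((((1 / Real.sqrt 2 : ℝ) : ℂ) • ((A0 + A1) ⊗ₖ (B1 ⊗ₖ (C1 ⊗ₖ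
        (1 : Matrix nG nG ℂ))))).mulVec ψ) = ε • ψ) :
    A0 * A1 + A1 * A0 = 0 :=
  stmt_10_general ψ A0 A1 B1 C1 hA0sq hA1sq hB1sq hC1sq hfull ε hε heig
end

section
/- Let |ψ⟩ ∈ H_A⊗H_B⊗H_C⊗H_G be such that all single-party reduced density matrices are full rank, with H_A = ℂ²⊗H_{A''}, and suppose Hermitian unitaries B₀, B₁ on H_B and C₁ on H_C satisfy (−1)^{l₁}(X⊗1_{A''})⊗B₁⊗C₁|ψ⟩ = |ψ⟩ and (−1)^{l₁+l₂}(Z⊗1_{A''})⊗B₀⊗1|ψ⟩ = |ψ⟩. Then B₀ and B₁ anticommute. -/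
open Matrix Finset
open scoped Kronecker

noncomputable section

lemma neg_kron {m n p q : Type*} (A : Matrix m n ℂ) (B : Matrix p q ℂ) :
    (-A) ⊗ₖ B = -(A ⊗ₖ B) := by
  ext ⟨i,j⟩ ⟨k,l⟩; simp [Matrix.kroneckerMap_apply]

lemma PZX : PZ * PX = -(PX * PZ) := by
  ext i j; fin_cases i <;> fin_cases j <;>
    simp [PX, PZ, Matrix.mul_apply, Fin.sum_univ_two]

lemma PWinv : (-(PX * PZ)) * (PX * PZ) = 1 := by
  ext i j; fin_cases i <;> fin_cases j <;>
    simp [PX, PZ, Matrix.mul_apply, Fin.sum_univ_two, Matrix.one_apply]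

/-- If `(−1)^{l₁}(X⊗1)⊗B₁⊗C₁|ψ⟩ = |ψ⟩` and `(−1)^{l₁+l₂}(Z⊗1)⊗B₀⊗1|ψ⟩ = |ψ⟩`
with all single-party reduced states full rank, then `B₀` and `B₁` anticommute. -/
theorem stmt_11 {nA2 nB nC nG : Type*}
    [Fintype nA2] [Fintype nB] [Fintype nC] [Fintype nG]
    [DecidableEq nA2] [DecidableEq nB] [DecidableEq nC] [DecidableEq nG]
    (ψ : (Fin 2 × nA2) × nB × nC × nG → ℂ)
    (B0 B1 : Matrix nB nB ℂ) (C1 : Matrix nC nC ℂ)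
    (hB0 : B0.IsHermitian) (hB1 : B1.IsHermitian) (hC1 : C1.IsHermitian)
    (hB0sq : B0 * B0 = 1) (hB1sq : B1 * B1 = 1) (hC1sq : C1 * C1 = 1)
    (l1 l2 : Fin 2)
    (hfullA : (Matrix.of fun i i' : Fin 2 × nA2 =>
        ∑ x : nB × nC × nG, ψ (i, x) * star (ψ (i', x))).det ≠ 0)
    (hfullB : (Matrix.of fun j j' : nB =>
        ∑ y : (Fin 2 × nA2) × nC × nG,
          ψ (y.1, j, y.2.1, y.2.2) * star (ψ (y.1, j', y.2.1, y.2.2))).det ≠ 0)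
    (hfullC : (Matrix.of fun k k' : nC =>
        ∑ y : (Fin 2 × nA2) × nB × nG,
          ψ (y.1, y.2.1, k, y.2.2) * star (ψ (y.1, y.2.1, k', y.2.2))).det ≠ 0)
    (hfullG : (Matrix.of fun g g' : nG =>
        ∑ y : (Fin 2 × nA2) × nB × nC,
          ψ (y.1, y.2.1, y.2.2, g) * star (ψ (y.1, y.2.1, y.2.2, g'))).det ≠ 0)
    (heig1 : (((-1 : ℂ) ^ (l1 : ℕ)) • (((PX ⊗ₖ (1 : Matrix nA2 nA2 ℂ)) ⊗ₖ
        (B1 ⊗ₖ (C1 ⊗ₖ (1 : Matrix nG nG ℂ)))).mulVec ψ)) = ψ)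
    (heig2 : (((-1 : ℂ) ^ ((l1 : ℕ) + (l2 : ℕ))) • (((PZ ⊗ₖ (1 : Matrix nA2 nA2 ℂ)) ⊗ₖ
        (B0 ⊗ₖ ((1 : Matrix nC nC ℂ) ⊗ₖ (1 : Matrix nG nG ℂ)))).mulVec ψ)) = ψ) :
    B0 * B1 + B1 * B0 = 0 := by
  set s1 : ℂ := (-1 : ℂ) ^ (l1 : ℕ) with hs1
  set s2 : ℂ := (-1 : ℂ) ^ ((l1 : ℕ) + (l2 : ℕ)) with hs2
  have hs1sq : s1 * s1 = 1 := by
    rw [hs1, ← pow_add]; exact Even.neg_one_pow ⟨_, rfl⟩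
  have hs2sq : s2 * s2 = 1 := by
    rw [hs2, ← pow_add]; exact Even.neg_one_pow ⟨_, rfl⟩
  set O1 : Matrix ((Fin 2 × nA2) × nB × nC × nG) ((Fin 2 × nA2) × nB × nC × nG) ℂ :=
    (PX ⊗ₖ (1 : Matrix nA2 nA2 ℂ)) ⊗ₖ (B1 ⊗ₖ (C1 ⊗ₖ (1 : Matrix nG nG ℂ))) with hO1
  set O2 : Matrix ((Fin 2 × nA2) × nB × nC × nG) ((Fin 2 × nA2) × nB × nC × nG) ℂ :=
    (PZ ⊗ₖ (1 : Matrix nA2 nA2 ℂ)) ⊗ₖ (B0 ⊗ₖ ((1 : Matrix nC nC ℂ) ⊗ₖ (1 : Matrix nG nG ℂ))) with hO2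
  have h1 : O1.mulVec ψ = s1 • ψ := by
    have := congrArg (fun v => s1 • v) heig1
    simp only [smul_smul, hs1sq, one_smul] at this
    exact this
  have h2 : O2.mulVec ψ = s2 • ψ := by
    have := congrArg (fun v => s2 • v) heig2
    simp only [smul_smul, hs2sq, one_smul] at this
    exact this
  have h12 : (O1 * O2).mulVec ψ = (s2 * s1) • ψ := by
    rw [← Matrix.mulVec_mulVec, h2, Matrix.mulVec_smul, h1, smul_smul]
  have h21 : (O2 * O1).mulVec ψ = (s1 * s2) • ψ := by
    rw [← Matrix.mulVec_mulVec, h1, Matrix.mulVec_smul, h2, smul_smul]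
  set M : Matrix nB nB ℂ := B1 * B0 + B0 * B1 with hM
  have hNψ : ((O1 * O2) - (O2 * O1)).mulVec ψ = 0 := by
    rw [Matrix.sub_mulVec, h12, h21, mul_comm s2 s1, sub_self]
  have hN : (O1 * O2) - (O2 * O1) =
      ((PX * PZ) ⊗ₖ (1 : Matrix nA2 nA2 ℂ)) ⊗ₖ
        (M ⊗ₖ (C1 ⊗ₖ (1 : Matrix nG nG ℂ))) := by
    rw [hO1, hO2]
    simp only [← Matrix.mul_kronecker_mul, Matrix.mul_one, Matrix.one_mul, PZX,
      neg_kron, sub_neg_eq_add, hM, Matrix.add_kronecker, Matrix.kronecker_add]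
  set W : Matrix (Fin 2) (Fin 2) ℂ := -(PX * PZ) with hW
  set P : Matrix ((Fin 2 × nA2) × nB × nC × nG) ((Fin 2 × nA2) × nB × nC × nG) ℂ :=
    (W ⊗ₖ (1 : Matrix nA2 nA2 ℂ)) ⊗ₖ
      ((1 : Matrix nB nB ℂ) ⊗ₖ (C1 ⊗ₖ (1 : Matrix nG nG ℂ))) with hP
  have hz : ((1 : Matrix (Fin 2 × nA2) (Fin 2 × nA2) ℂ) ⊗ₖ
      (M ⊗ₖ (1 : Matrix (nC × nG) (nC × nG) ℂ))).mulVec ψ = 0 := by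
    have hPN : P * ((O1 * O2) - (O2 * O1)) =
        (1 : Matrix (Fin 2 × nA2) (Fin 2 × nA2) ℂ) ⊗ₖ
          (M ⊗ₖ (1 : Matrix (nC × nG) (nC × nG) ℂ)) := by
      rw [hN, hP]
      simp only [← Matrix.mul_kronecker_mul, Matrix.mul_one, Matrix.one_mul, hW,
        PWinv, hC1sq, Matrix.one_kronecker_one]
    rw [← hPN, ← Matrix.mulVec_mulVec, hNψ, Matrix.mulVec_zero]
  have key : ∀ (a : Fin 2 × nA2) (b : nB) (c : nC) (g : nG),
      ∑ b', M b b' * ψ (a, b', c, g) = 0 := by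
    intro a b c g
    have := congrFun hz (a, b, c, g)
    simpa [Matrix.mulVec, dotProduct, Fintype.sum_prod_type, Matrix.one_apply,
      Matrix.kroneckerMap_apply, ite_mul, mul_ite, mul_comm, mul_assoc] using this
  have hMρ : M * (Matrix.of fun j j' : nB =>
      ∑ y : (Fin 2 × nA2) × nC × nG,
        ψ (y.1, j, y.2.1, y.2.2) * star (ψ (y.1, j', y.2.1, y.2.2))) = 0 := by
    ext j j'
    simp only [Matrix.mul_apply, Matrix.of_apply, Matrix.zero_apply, Finset.mul_sum]
    rw [Finset.sum_comm]
    refine Finset.sum_eq_zero fun y _ => ?_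
    have : ∑ b', M j b' * (ψ (y.1, b', y.2.1, y.2.2) * star (ψ (y.1, j', y.2.1, y.2.2)))
        = (∑ b', M j b' * ψ (y.1, b', y.2.1, y.2.2)) * star (ψ (y.1, j', y.2.1, y.2.2)) := by
      rw [Finset.sum_mul]; exact Finset.sum_congr rfl fun b' _ => (mul_assoc _ _ _).symm
    rw [this, key, zero_mul]
  have hMzero : M = 0 := by
    have hu : IsUnit (Matrix.of fun j j' : nB =>
        ∑ y : (Fin 2 × nA2) × nC × nG,
          ψ (y.1, j, y.2.1, y.2.2) * star (ψ (y.1, j', y.2.1, y.2.2))).det :=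
      isUnit_iff_ne_zero.mpr hfullB
    calc M = M * ((Matrix.of fun j j' : nB =>
        ∑ y : (Fin 2 × nA2) × nC × nG,
          ψ (y.1, j, y.2.1, y.2.2) * star (ψ (y.1, j', y.2.1, y.2.2))) *
        (Matrix.of fun j j' : nB =>
        ∑ y : (Fin 2 × nA2) × nC × nG,
          ψ (y.1, j, y.2.1, y.2.2) * star (ψ (y.1, j', y.2.1, y.2.2)))⁻¹) := by
          rw [Matrix.mul_nonsing_inv _ hu, Matrix.mul_one]
      _ = (M * _) * _ := by rw [Matrix.mul_assoc]
      _ = 0 := by rw [hMρ, Matrix.zero_mul]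
  rw [add_comm, ← hM]; exact hMzero
end
end

section
/- Let M be a positive semi-definite operator on ℂ⁸⊗H with M ≤ 1, let {|φ_l⟩}_{l=0}^{7} be an orthonormal basis of ℂ⁸, and let σ_1 be a full-rank density matrix on H. If Tr[(|φ_0⟩⟨φ_0| ⊗ σ_1) M] = 1, then M = |φ_0⟩⟨φ_0| ⊗ 1_H + L, where L is positive semi-definite and (⟨φ_0|⊗1)L(|φ_l⟩⊗1) = 0 = (⟨φ_l|⊗1)L(|φ_0⟩⊗1) for all l. -/
open Matrix Finset
open scoped ComplexOrder Kronecker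

/-!
Write `Q = |φ₀⟩⟨φ₀| ⊗ 1`. The trace condition says `Tr[(|φ₀⟩⟨φ₀| ⊗ σ₁)(1 - M)] = 0`; a vanishing
trace of a product of two positive semidefinite matrices forces the product itself to vanish, and
cancelling the invertible `σ₁` gives `Q (1 - M) = 0`, i.e. `Q M = Q = M Q`. Then
`L = M - Q = (1 - Q) M (1 - Q) ≥ 0` and `Q L = L Q = 0`, which is exactly the vanishing of the
blocks of `L` in the row and column of `φ₀`.
-/

noncomputable section

/-- Block `(⟨v|⊗1) L (|w⟩⊗1)` of an operator on `ℂ⁸ ⊗ H`. -/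
def blk {D nH : Type*} [Fintype D] [Fintype nH]
    (L : Matrix (D × nH) (D × nH) ℂ) (v w : D → ℂ) : Matrix nH nH ℂ :=
  Matrix.of fun p q => ∑ i, ∑ j, star (v i) * L (i, p) (j, q) * w j

namespace Matrix

variable {n 𝕜 : Type*} [Fintype n] [RCLike 𝕜]

theorem PosSemidef.mul_eq_zero_of_trace_mul_eq_zero {A B : Matrix n n 𝕜}
    (hA : A.PosSemidef) (hB : B.PosSemidef) (h : (A * B).trace = 0) : A * B = 0 := by
  classical
  open scoped MatrixOrder in
  obtain ⟨C, rfl⟩ := CStarAlgebra.nonneg_iff_eq_star_mul_self.mp hA.nonneg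
  open scoped MatrixOrder in
  obtain ⟨D, rfl⟩ := CStarAlgebra.nonneg_iff_eq_star_mul_self.mp hB.nonneg
  simp only [star_eq_conjTranspose] at h ⊢
  -- `Tr[Cᴴ C Dᴴ D] = Tr[(C Dᴴ)(C Dᴴ)ᴴ]`
  have hCD : C * Dᴴ = 0 := by
    rw [← trace_mul_conjTranspose_self_eq_zero_iff, ← h, conjTranspose_mul,
      conjTranspose_conjTranspose, ← mul_assoc, trace_mul_comm]
    simp only [mul_assoc]
  calc Cᴴ * C * (Dᴴ * D) = Cᴴ * (C * Dᴴ) * D := by simp only [mul_assoc]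
    _ = 0 := by rw [hCD, mul_zero, zero_mul]

/-- If `Q` is an orthogonal projection with `Q M = Q`, then `M - Q = (1 - Q) M (1 - Q)`. -/
theorem PosSemidef.sub_of_mul_eq_left [DecidableEq n] {M Q : Matrix n n 𝕜} (hM : M.PosSemidef)
    (hQ : Q.IsHermitian) (hQQ : Q * Q = Q) (hQM : Q * M = Q) : (M - Q).PosSemidef := by
  have hMQ : M * Q = Q := by
    simpa only [conjTranspose_mul, hQ.eq, hM.isHermitian.eq] using congrArg (·ᴴ) hQM
  have h : (1 - Q)ᴴ * M * (1 - Q) = M - Q := by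
    simp only [conjTranspose_sub, conjTranspose_one, hQ.eq, sub_mul, mul_sub, one_mul, mul_one,
      hQM, hMQ, hQQ, sub_self, sub_zero]
  exact h ▸ hM.conjTranspose_mul_mul_same (1 - Q)

theorem PosSemidef.kronecker_one_mul_eq_zero {m : Type*} [Fintype m] [DecidableEq n]
    [DecidableEq m] {N : Matrix (n × m) (n × m) 𝕜} {P : Matrix n n 𝕜} {σ : Matrix m m 𝕜}
    (hP : P.PosSemidef) (hσ : σ.PosDef) (hN : N.PosSemidef) (h : ((P ⊗ₖ σ) * N).trace = 0) :
    (P ⊗ₖ (1 : Matrix m m 𝕜)) * N = 0 := by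
  have hPσN : (P ⊗ₖ σ) * N = 0 :=
    (hP.kronecker hσ.posSemidef).mul_eq_zero_of_trace_mul_eq_zero hN h
  have hσ' : σ⁻¹ * σ = 1 := nonsing_inv_mul σ ((isUnit_iff_isUnit_det σ).mp hσ.isUnit)
  calc (P ⊗ₖ (1 : Matrix m m 𝕜)) * N = ((1 : Matrix n n 𝕜) ⊗ₖ σ⁻¹) * ((P ⊗ₖ σ) * N) := by
        rw [← mul_assoc, ← mul_kronecker_mul, one_mul, hσ']
    _ = 0 := by rw [hPσN, mul_zero]

end Matrix

section Blocks

variable {D nH : Type*} [Fintype D] [Fintype nH] [DecidableEq nH]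

variable (nH) in
/-- The operator `|v⟩ ⊗ 1 : H → ℂ^D ⊗ H`. -/
def colKronOne (v : D → ℂ) : Matrix (D × nH) nH ℂ :=
  of fun x q => v x.1 * (1 : Matrix nH nH ℂ) x.2 q

theorem trace_proj (v : D → ℂ) : (proj v).trace = inn v v := by
  simp [trace, proj, vecMulVec_apply, inn, mul_comm]

theorem posSemidef_proj (v : D → ℂ) : (proj v).PosSemidef :=
  posSemidef_vecMulVec_self_star v

omit [Fintype D] in
theorem colKronOne_mul_conjTranspose (v : D → ℂ) :
    colKronOne nH v * (colKronOne nH v)ᴴ = proj v ⊗ₖ (1 : Matrix nH nH ℂ) := by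
  ext ⟨i, p⟩ ⟨k, r⟩
  simp only [colKronOne, proj, mul_apply, conjTranspose_apply, of_apply, kroneckerMap_apply,
    vecMulVec_apply, Pi.star_apply, one_apply, mul_ite, mul_one, mul_zero, ite_mul, zero_mul,
    sum_ite_eq, mem_univ, if_true]
  split_ifs <;> simp_all

theorem conjTranspose_colKronOne_mul_self {v : D → ℂ} (hv : inn v v = 1) :
    (colKronOne nH v)ᴴ * colKronOne nH v = 1 := by
  ext p q
  simp only [colKronOne, mul_apply, Fintype.sum_prod_type, conjTranspose_apply, of_apply, one_apply]
  by_cases h : p = q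
  · simpa [h, inn] using hv
  · simp [h, Ne.symm h]

theorem blk_eq_conjTranspose_mul_mul (L : Matrix (D × nH) (D × nH) ℂ) (v w : D → ℂ) :
    blk L v w = (colKronOne nH v)ᴴ * L * colKronOne nH w := by
  ext p q
  simp only [blk, colKronOne, mul_apply, conjTranspose_apply, of_apply, Fintype.sum_prod_type,
    one_apply, RCLike.star_def, apply_ite (starRingEnd ℂ), map_zero, mul_ite, mul_one, mul_zero,
    ite_mul, zero_mul, sum_ite_eq', mem_univ, if_true, sum_mul]
  rw [Finset.sum_comm]

theorem blk_conjTranspose (L : Matrix (D × nH) (D × nH) ℂ) (v w : D → ℂ) :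
    blk Lᴴ v w = (blk L w v)ᴴ := by
  simp only [blk_eq_conjTranspose_mul_mul, conjTranspose_mul, conjTranspose_conjTranspose,
    Matrix.mul_assoc]

theorem blk_eq_zero_of_proj_kronecker_one_mul_eq_zero {L : Matrix (D × nH) (D × nH) ℂ}
    {v : D → ℂ} (hv : inn v v = 1) (h : (proj v ⊗ₖ (1 : Matrix nH nH ℂ)) * L = 0) (w : D → ℂ) :
    blk L v w = 0 := by
  set E := colKronOne nH v
  calc blk L v w = Eᴴ * (E * Eᴴ) * L * colKronOne nH w := by
        rw [blk_eq_conjTranspose_mul_mul, ← Matrix.mul_assoc Eᴴ E,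
          conjTranspose_colKronOne_mul_self hv, Matrix.one_mul]
    _ = 0 := by
        rw [colKronOne_mul_conjTranspose, Matrix.mul_assoc Eᴴ, h, Matrix.mul_zero, Matrix.zero_mul]

end Blocks

theorem stmt_15_general {nH : Type*} [Fintype nH] [DecidableEq nH]
    (M : Matrix (Fin 8 × nH) (Fin 8 × nH) ℂ)
    (hpos : M.PosSemidef)
    (hle : ((1 : Matrix (Fin 8 × nH) (Fin 8 × nH) ℂ) - M).PosSemidef)
    (φ : Fin 8 → Fin 8 → ℂ)
    (hon : ∀ l l' : Fin 8, inn (φ l) (φ l') = if l = l' then 1 else 0)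
    (σ1 : Matrix nH nH ℂ) (hσ : σ1.PosDef) (hσtr : σ1.trace = 1)
    (htr : ((proj (φ 0) ⊗ₖ σ1) * M).trace = 1) :
    ∃ L : Matrix (Fin 8 × nH) (Fin 8 × nH) ℂ,
      L.PosSemidef ∧
      M = proj (φ 0) ⊗ₖ (1 : Matrix nH nH ℂ) + L ∧
      ∀ l : Fin 8, blk L (φ 0) (φ l) = 0 ∧ blk L (φ l) (φ 0) = 0 := by
  have hv : inn (φ 0) (φ 0) = 1 := by simpa using hon 0 0
  set E := colKronOne nH (φ 0)
  set Q := proj (φ 0) ⊗ₖ (1 : Matrix nH nH ℂ)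
  have hQ : Q = E * Eᴴ := (colKronOne_mul_conjTranspose _).symm
  have hQQ : Q * Q = Q := by
    rw [hQ, Matrix.mul_assoc, ← Matrix.mul_assoc Eᴴ, conjTranspose_colKronOne_mul_self hv,
      Matrix.one_mul]
  have hQM : Q * M = Q := by
    have htr_compl : ((proj (φ 0) ⊗ₖ σ1) * (1 - M)).trace = 0 := by
      rw [mul_sub, mul_one, trace_sub, trace_kronecker, trace_proj, hv, hσtr, htr, one_mul,
        sub_self]
    have h : Q * (1 - M) = 0 := (posSemidef_proj _).kronecker_one_mul_eq_zero hσ hle htr_compl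
    rwa [mul_sub, mul_one, sub_eq_zero, eq_comm] at h
  have hL : (M - Q).PosSemidef :=
    hpos.sub_of_mul_eq_left (hQ ▸ isHermitian_mul_conjTranspose_self E) hQQ hQM
  have hQL : Q * (M - Q) = 0 := by rw [mul_sub, hQM, hQQ, sub_self]
  refine ⟨M - Q, hL, (add_sub_cancel Q M).symm, fun l => ⟨?_, ?_⟩⟩
  · exact blk_eq_zero_of_proj_kronecker_one_mul_eq_zero hv hQL _
  · rw [← hL.isHermitian.eq, blk_conjTranspose,
      blk_eq_zero_of_proj_kronecker_one_mul_eq_zero hv hQL, conjTranspose_zero]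

/-- If `0 ≤ M ≤ 1` on `ℂ⁸ ⊗ H` and `Tr[(|φ₀⟩⟨φ₀| ⊗ σ₁) M] = 1` for a full-rank
density matrix `σ₁`, then `M = |φ₀⟩⟨φ₀| ⊗ 1 + L` with `L ≥ 0` having vanishing
blocks in the row and column of `|φ₀⟩`. -/
theorem stmt_15 {nH : Type*} [Fintype nH] [DecidableEq nH]
    (M : Matrix (Fin 8 × nH) (Fin 8 × nH) ℂ)
    (hpos : M.PosSemidef)
    (hle : ((1 : Matrix (Fin 8 × nH) (Fin 8 × nH) ℂ) - M).PosSemidef)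
    (φ : Fin 8 → Fin 8 → ℂ)
    (hon : ∀ l l' : Fin 8, inn (φ l) (φ l') = if l = l' then 1 else 0)
    (hspan : Submodule.span ℂ (Set.range φ) = ⊤)
    (σ1 : Matrix nH nH ℂ) (hσ : σ1.PosDef) (hσtr : σ1.trace = 1)
    (htr : ((proj (φ 0) ⊗ₖ σ1) * M).trace = 1) :
    ∃ L : Matrix (Fin 8 × nH) (Fin 8 × nH) ℂ,
      L.PosSemidef ∧
      M = proj (φ 0) ⊗ₖ (1 : Matrix nH nH ℂ) + L ∧
      ∀ l : Fin 8, blk L (φ 0) (φ l) = 0 ∧ blk L (φ l) (φ 0) = 0 :=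
  stmt_15_general M hpos hle φ hon σ1 hσ hσtr htr
end
end

section
/- Let A be a Hermitian unitary on ℂ²⊗H (finite-dimensional H) that anticommutes with X⊗1: A(X⊗1) + (X⊗1)A = 0. Then A = Z⊗Q₁ + Y⊗Q₃ for Hermitian operators Q₁, Q₃ on H satisfying Q₁² + Q₃² = 1 and Q₁Q₃ = Q₃Q₁. -/
open Matrix
open scoped Kronecker

noncomputable section

/-- A Hermitian unitary on `ℂ² ⊗ H` anticommuting with `X ⊗ 1` has the form
`Z ⊗ Q₁ + Y ⊗ Q₃` with `Q₁, Q₃` commuting Hermitian operators satisfying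
`Q₁² + Q₃² = 1`. -/
theorem stmt_16 {nH : Type*} [Fintype nH] [DecidableEq nH]
    (A : Matrix (Fin 2 × nH) (Fin 2 × nH) ℂ)
    (hA : A.IsHermitian) (hAsq : A * A = 1)
    (hanti : A * (PX ⊗ₖ (1 : Matrix nH nH ℂ)) + (PX ⊗ₖ (1 : Matrix nH nH ℂ)) * A = 0) :
    ∃ Q1 Q3 : Matrix nH nH ℂ,
      Q1.IsHermitian ∧ Q3.IsHermitian ∧
      Q1 * Q1 + Q3 * Q3 = 1 ∧ Q1 * Q3 = Q3 * Q1 ∧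
      A = PZ ⊗ₖ Q1 + PY ⊗ₖ Q3 := by
  have h11 : ∀ a b : nH, A (1,a) (1,b) = - A (0,a) (0,b) := by
    intro a b
    have := congrFun (congrFun hanti (0,a)) (1,b)
    simp [Matrix.add_apply, Matrix.mul_apply, Fintype.sum_prod_type, Fin.sum_univ_two,
      PX, Matrix.one_apply, Matrix.zero_apply] at this
    linear_combination this
  have h10 : ∀ a b : nH, A (1,a) (0,b) = - A (0,a) (1,b) := by
    intro a b
    have := congrFun (congrFun hanti (0,a)) (0,b)
    simp [Matrix.add_apply, Matrix.mul_apply, Fintype.sum_prod_type, Fin.sum_univ_two,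
      PX, Matrix.one_apply, Matrix.zero_apply] at this
    linear_combination this
  refine ⟨A.submatrix (fun a => ((0:Fin 2), a)) (fun b => ((0:Fin 2), b)),
    (Complex.I : ℂ) • A.submatrix (fun a => ((0:Fin 2), a)) (fun b => ((1:Fin 2), b)),
    ?_, ?_, ?_, ?_, ?_⟩
  · ext a b
    simp only [Matrix.conjTranspose_apply, Matrix.submatrix_apply]
    rw [← hA.apply, star_star]
  · ext a b
    simp only [Matrix.conjTranspose_apply, Matrix.smul_apply, Matrix.submatrix_apply,
      smul_eq_mul]
    rw [← hA.apply, h10]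
    simp [star_mul', star_star, Complex.star_def, Complex.conj_I]
  · ext a b
    have := congrFun (congrFun hAsq (0,a)) (0,b)
    simp only [Matrix.mul_apply, Fintype.sum_prod_type, Fin.sum_univ_two] at this
    simp only [Matrix.add_apply, Matrix.mul_apply, Matrix.smul_apply, Matrix.submatrix_apply,
      Matrix.one_apply, smul_eq_mul, Prod.mk.injEq]
    rw [show ((if a = b then (1:ℂ) else 0)) = (1 : Matrix (Fin 2 × nH) (Fin 2 × nH) ℂ) (0,a) (0,b) by
      simp [Matrix.one_apply, Prod.ext_iff]]
    rw [← this]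
    simp only [h10]
    congr 1
    apply Finset.sum_congr rfl
    intro c _
    linear_combination A (0,a) (1,c) * A (0,c) (1,b) * Complex.I_sq
  · ext a b
    have h := congrFun (congrFun hAsq (0,a)) (1,b)
    simp only [Matrix.mul_apply, Fintype.sum_prod_type, Fin.sum_univ_two,
      Matrix.one_apply, Prod.mk.injEq, h11] at h
    have hif : (if ((0:Fin 2) = 1 ∧ a = b) then (1:ℂ) else 0) = 0 := by simp
    rw [hif] at h
    have key : ∑ c, A (0,a) (0,c) * A (0,c) (1,b) = ∑ c, A (0,a) (1,c) * A (0,c) (0,b) := by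
      have h' : (∑ c, A (0,a) (0,c) * A (0,c) (1,b)) - ∑ c, A (0,a) (1,c) * A (0,c) (0,b) = 0 := by
        rw [← h]
        rw [sub_eq_add_neg, ← Finset.sum_neg_distrib]
        congr 1
        apply Finset.sum_congr rfl
        intro c _
        ring
      linear_combination h'
    simp only [Matrix.mul_apply, Matrix.smul_apply, Matrix.submatrix_apply, smul_eq_mul]
    calc (∑ x, A (0,a) (0,x) * (Complex.I * A (0,x) (1,b)))
        = Complex.I * ∑ x, A (0,a) (0,x) * A (0,x) (1,b) := by
          rw [Finset.mul_sum]; exact Finset.sum_congr rfl fun c _ => by ring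
      _ = Complex.I * ∑ x, A (0,a) (1,x) * A (0,x) (0,b) := by rw [key]
      _ = ∑ x, Complex.I * A (0,a) (1,x) * A (0,x) (0,b) := by
          rw [Finset.mul_sum]; exact Finset.sum_congr rfl fun c _ => by ring
  · ext ⟨i,a⟩ ⟨j,b⟩
    fin_cases i <;> fin_cases j <;>
      simp [Matrix.add_apply, Matrix.kroneckerMap_apply, PZ, PY, Matrix.smul_apply,
        Matrix.submatrix_apply, h10, h11] <;> ring_nf <;> simp [Complex.I_sq]
end
end

section
/- The operator S₁ = 1 + ((X+Z)/√2)⊗Z⊗1 + 1⊗Z⊗Z + ((X+Z)/√2)⊗1⊗Z + ((X−Z)/√2)⊗X⊗X − ((X−Z)/√2)⊗Y⊗Y − Y⊗X⊗Y − Y⊗Y⊗X on (ℂ²)^⊗3 equals 8|ψ⟩⟨ψ|, where |ψ⟩ = (|0̄00⟩ + |1̄11⟩)/√2. -/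
open Matrix Finset Real
open scoped ComplexOrder Kronecker

noncomputable section

set_option maxHeartbeats 4000000 in
private lemma key_entries :
    (1 + (((1 / Real.sqrt 2 : ℝ) : ℂ) • (PX + PZ)) ⊗ₖ (PZ ⊗ₖ (1:Matrix (Fin 2) (Fin 2) ℂ))
      + (1:Matrix (Fin 2) (Fin 2) ℂ) ⊗ₖ (PZ ⊗ₖ PZ)
      + (((1 / Real.sqrt 2 : ℝ) : ℂ) • (PX + PZ)) ⊗ₖ ((1:Matrix (Fin 2) (Fin 2) ℂ) ⊗ₖ PZ)
      + (((1 / Real.sqrt 2 : ℝ) : ℂ) • (PX - PZ)) ⊗ₖ (PX ⊗ₖ PX)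
      - (((1 / Real.sqrt 2 : ℝ) : ℂ) • (PX - PZ)) ⊗ₖ (PY ⊗ₖ PY)
      - PY ⊗ₖ (PX ⊗ₖ PY) - PY ⊗ₖ (PY ⊗ₖ PX) : Matrix Q3 Q3 ℂ)
    = (8 : ℂ) • proj (fun x : Q3 =>
      ((1 / Real.sqrt 2 : ℝ) : ℂ) *
        (ket0b x.1 * ket0 x.2.1 * ket0 x.2.2 + ket1b x.1 * ket1 x.2.1 * ket1 x.2.2)) := by
  have hcs : Real.cos (π/8)^2 + Real.sin (π/8)^2 = 1 := by
    rw [add_comm]; exact Real.sin_sq_add_cos_sq _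
  have hc2 : Real.cos (π/8)^2 - Real.sin (π/8)^2 = Real.sqrt 2 / 2 := by
    have h := Real.cos_two_mul (π/8)
    rw [show 2*(π/8)=π/4 by ring, Real.cos_pi_div_four] at h
    nlinarith [hcs]
  have hs2 : 2 * (Real.sin (π/8) * Real.cos (π/8)) = Real.sqrt 2 / 2 := by
    have h := Real.sin_two_mul (π/8)
    rw [show 2*(π/8)=π/4 by ring, Real.sin_pi_div_four] at h
    linear_combination -h
  have hr : (Real.sqrt 2:ℝ) ^ 2 = 2 := Real.sq_sqrt (by norm_num)
  have hr1 : (1:ℝ) ≤ Real.sqrt 2 := by nlinarith [Real.sqrt_nonneg 2]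
  have ha : Real.sqrt (2 + Real.sqrt 2) ^ 2 = 2 + Real.sqrt 2 :=
    Real.sq_sqrt (by linarith)
  have hb : Real.sqrt (2 - Real.sqrt 2) ^ 2 = 2 - Real.sqrt 2 :=
    Real.sq_sqrt (by nlinarith)
  have hab : Real.sqrt (2 + Real.sqrt 2) * Real.sqrt (2 - Real.sqrt 2) = Real.sqrt 2 := by
    rw [← Real.sqrt_mul (by linarith)]
    congr 1; nlinarith
  have hcq : Real.cos (π/8) = Real.sqrt (2 + Real.sqrt 2) / 2 := Real.cos_pi_div_eight
  have hsq : Real.sin (π/8) = Real.sqrt (2 - Real.sqrt 2) / 2 := Real.sin_pi_div_eight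
  ext ⟨i,j,k⟩ ⟨i',j',k'⟩
  fin_cases i <;> fin_cases j <;> fin_cases k <;> fin_cases i' <;> fin_cases j' <;> fin_cases k' <;>
    simp [Matrix.kroneckerMap_apply, proj, Matrix.vecMulVec_apply, PX, PY, PZ,
      ket0, ket1, ket0b, ket1b, Matrix.one_apply, Complex.ext_iff,
      Prod.ext_iff, Prod.fst_one, Prod.snd_one, Fin.ext_iff] <;>
    nlinarith [hcs, hc2, hs2, hr, ha, hb, hab, hcq, hsq, Real.sqrt_nonneg 2, Real.sqrt_nonneg (2 + Real.sqrt 2), Real.sqrt_nonneg (2 - Real.sqrt 2)]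

/-- `S₁ = 8 |ψ⟩⟨ψ|` with `|ψ⟩ = (|0̄00⟩ + |1̄11⟩)/√2`. -/
theorem stmt_17 :
    letI A0 : Matrix (Fin 2) (Fin 2) ℂ := ((1 / Real.sqrt 2 : ℝ) : ℂ) • (PX + PZ)
    letI A1 : Matrix (Fin 2) (Fin 2) ℂ := ((1 / Real.sqrt 2 : ℝ) : ℂ) • (PX - PZ)
    letI one2 : Matrix (Fin 2) (Fin 2) ℂ := 1
    letI S1 : Matrix Q3 Q3 ℂ :=
      1 + A0 ⊗ₖ (PZ ⊗ₖ one2) + one2 ⊗ₖ (PZ ⊗ₖ PZ) + A0 ⊗ₖ (one2 ⊗ₖ PZ)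
        + A1 ⊗ₖ (PX ⊗ₖ PX) - A1 ⊗ₖ (PY ⊗ₖ PY) - PY ⊗ₖ (PX ⊗ₖ PY) - PY ⊗ₖ (PY ⊗ₖ PX)
    letI ψ : Q3 → ℂ := fun x =>
      ((1 / Real.sqrt 2 : ℝ) : ℂ) *
        (ket0b x.1 * ket0 x.2.1 * ket0 x.2.2 + ket1b x.1 * ket1 x.2.1 * ket1 x.2.2)
    S1 = (8 : ℂ) • proj ψ := by
  exact key_entries
end
end
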